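/- arXiv:1602.07887 — 7 statements merged into one kernel-verified Lean document; each statement's English description precedes it below -/
import Mathlib

section
/- Let E be a real inner product space, let ν ≥ 0 be an integer, and let π_0, π_1, …, π_ν be pairwise orthogonal nonzero elements of E. Let n ≥ 1, let W be a symmetric positive semidefinite real n×n matrix, and let f : Fin n → E. Define the quadratic functional J_W(f) = Σ_{i=1}^{n} Σ_{k=1}^{n} W_{ik} ⟨f_i, f_k⟩, and for each j define the vector w_j ∈ ℝ^n componentwise by (w_j)_i = ⟨f_i, π_j⟩. Then J_W(f) ≥ Σ_{j=0}^{ν} (1/‖π_j‖²) · w_jᵀ W w_j. -/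
/-!
Write `W = ∑ₗ vₗ vₗᵀ` (a positive semidefinite matrix is a sum of rank-one ones). Then, with
`yₗ = ∑ᵢ vₗᵢ fᵢ`, the right-hand side is `∑ₗ ‖yₗ‖²` and `w_jᵀ W w_j = ∑ₗ ⟪yₗ, π_j⟫²`, so the
inequality is Bessel's inequality `∑ⱼ ⟪yₗ, π_j⟫² / ‖π_j‖² ≤ ‖yₗ‖²` summed over `l`.
-/

open scoped RealInnerProductSpace
open Matrix

section

variable {E : Type*} [NormedAddCommGroup E] [InnerProductSpace ℝ E]

theorem orthonormal_inv_norm_smul {ι : Type*} {π : ι → E}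
    (horth : Pairwise fun i j => ⟪π i, π j⟫ = 0) (hne : ∀ i, π i ≠ 0) :
    Orthonormal ℝ fun i => ‖π i‖⁻¹ • π i :=
  ⟨fun i => norm_smul_inv_norm (hne i), fun i j hij => by
    simp only [real_inner_smul_left, real_inner_smul_right, horth hij, mul_zero]⟩

theorem sum_inner_sq_div_norm_sq_le {ι : Type*} [Fintype ι] {π : ι → E}
    (horth : Pairwise fun i j => ⟪π i, π j⟫ = 0) (hne : ∀ i, π i ≠ 0) (y : E) :
    ∑ j, ⟪y, π j⟫ ^ 2 / ‖π j‖ ^ 2 ≤ ‖y‖ ^ 2 := by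
  convert (orthonormal_inv_norm_smul horth hne).sum_inner_products_le y (s := .univ)
    using 2 with j
  rw [real_inner_smul_left, Real.norm_eq_abs, sq_abs, real_inner_comm]
  ring

theorem norm_sum_smul_sq {ι : Type*} (s : Finset ι) (c : ι → ℝ) (x : ι → E) :
    ‖∑ i ∈ s, c i • x i‖ ^ 2 = ∑ i ∈ s, ∑ k ∈ s, c i * c k * ⟪x i, x k⟫ := by
  rw [← real_inner_self_eq_norm_sq, sum_inner]
  simp_rw [real_inner_smul_left, inner_sum, real_inner_smul_right, Finset.mul_sum, mul_assoc]

theorem sum_sum_vecMulVec_mul_inner {m n : Type*} [Fintype m] [Fintype n] (v : m → n → ℝ)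
    (x : n → E) :
    ∑ i, ∑ k, (∑ l, vecMulVec (v l) (v l)) i k * ⟪x i, x k⟫ = ∑ l, ‖∑ i, v l i • x i‖ ^ 2 := by
  simp only [norm_sum_smul_sq, Matrix.sum_apply, vecMulVec_apply, Finset.sum_mul]
  exact Finset.sum_comm_cycle

end

theorem dotProduct_sum_vecMulVec_mulVec {m n : Type*} [Fintype m] [Fintype n] (v : m → n → ℝ)
    (w : n → ℝ) :
    w ⬝ᵥ (∑ l, vecMulVec (v l) (v l)) *ᵥ w = ∑ l, (v l ⬝ᵥ w) ^ 2 := by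
  simp only [sum_mulVec, vecMulVec_mulVec, op_smul_eq_smul, dotProduct_comm w, sum_dotProduct,
    smul_dotProduct, smul_eq_mul, sq]

theorem stmt_0_general {E : Type*} [NormedAddCommGroup E] [InnerProductSpace ℝ E]
    (ν : ℕ) (π : Fin (ν + 1) → E)
    (hπorth : ∀ i j, i ≠ j → ⟪π i, π j⟫ = 0)
    (hπne : ∀ i, π i ≠ 0)
    (n : ℕ)
    (W : Matrix (Fin n) (Fin n) ℝ) (hWsym : W.IsSymm)
    (hWpsd : ∀ v : Fin n → ℝ, 0 ≤ v ⬝ᵥ W.mulVec v)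
    (f : Fin n → E) :
    ∑ j : Fin (ν + 1), (1 / ‖π j‖ ^ 2) *
        ((fun i => ⟪f i, π j⟫) ⬝ᵥ W.mulVec (fun i => ⟪f i, π j⟫))
      ≤ ∑ i : Fin n, ∑ k : Fin n, W i k * ⟪f i, f k⟫ := by
  have hW : W.PosSemidef :=
    .of_dotProduct_mulVec_nonneg (isHermitian_iff_isSymm.mpr hWsym) (by simpa using hWpsd)
  obtain ⟨m, v, rfl⟩ := posSemidef_iff_eq_sum_vecMulVec.mp hW
  simp only [star_trivial]
  set y : Fin m → E := fun l => ∑ i, v l i • f i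
  have hcoord : ∀ l j, v l ⬝ᵥ (fun i => ⟪f i, π j⟫) = ⟪y l, π j⟫ := fun l j => by
    simp only [y, sum_inner, real_inner_smul_left, dotProduct]
  calc ∑ j, 1 / ‖π j‖ ^ 2 * ((fun i => ⟪f i, π j⟫) ⬝ᵥ
          (∑ l, vecMulVec (v l) (v l)) *ᵥ fun i => ⟪f i, π j⟫)
      = ∑ l, ∑ j, ⟪y l, π j⟫ ^ 2 / ‖π j‖ ^ 2 := by
        simp only [dotProduct_sum_vecMulVec_mulVec, hcoord, Finset.mul_sum, one_div,
          inv_mul_eq_div]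
        exact Finset.sum_comm
    _ ≤ ∑ l, ‖y l‖ ^ 2 :=
        Finset.sum_le_sum fun l _ => sum_inner_sq_div_norm_sq_le hπorth hπne (y l)
    _ = _ := (sum_sum_vecMulVec_mul_inner v f).symm

/-- Bessel-type inequality (Lemma 1): for an orthogonal system of nonzero
vectors `π 0, …, π ν` in a real inner product space, a symmetric positive
semidefinite matrix `W` and `f : Fin n → E`,
`J_W(f) = ∑ i k, W i k * ⟪f i, f k⟫ ≥ ∑ j, (1/‖π j‖²) · w_jᵀ W w_j`,
where `(w j) i = ⟪f i, π j⟫`. -/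
theorem stmt_0 {E : Type*} [NormedAddCommGroup E] [InnerProductSpace ℝ E]
    (ν : ℕ) (π : Fin (ν + 1) → E)
    (hπorth : ∀ i j, i ≠ j → ⟪π i, π j⟫ = 0)
    (hπne : ∀ i, π i ≠ 0)
    (n : ℕ) (hn : 1 ≤ n)
    (W : Matrix (Fin n) (Fin n) ℝ) (hWsym : W.IsSymm)
    (hWpsd : ∀ v : Fin n → ℝ, 0 ≤ v ⬝ᵥ W.mulVec v)
    (f : Fin n → E) :
    ∑ j : Fin (ν + 1), (1 / ‖π j‖ ^ 2) *
        ((fun i => ⟪f i, π j⟫) ⬝ᵥ W.mulVec (fun i => ⟪f i, π j⟫))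
      ≤ ∑ i : Fin n, ∑ k : Fin n, W i k * ⟪f i, f k⟫ :=
  stmt_0_general ν π hπorth hπne n W hWsym hWpsd f
end

section
/- For integers m ≥ 0, n ≥ 0 and 0 ≤ k ≤ n, the coefficient of x^k in the polynomial P_{m,n}(x) equals (-1)^{n+k} · C(n,k) · C(m+n+k, n). -/
/-!
Dividing by `x^m` shifts coefficients by `m`, and the coefficient of `x^(k+m)` in
`dⁿ/dxⁿ [x^(m+n) (x-1)^n]` is `(m+n+k)ⁿ` (falling power) times the coefficient of `x^k`
in `(x-1)^n`; dividing the falling power by `n!` leaves `C(m+n+k, n)`.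
-/

open Polynomial

theorem coeff_X_sub_one_pow {R : Type*} [CommRing R] (n k : ℕ) :
    ((X - 1 : R[X]) ^ n).coeff k = (-1) ^ (n + k) * (n.choose k : R) := by
  -- for `k > n` both sides vanish, so the truncated exponent `n - k` may become `n + k`
  rw [sub_eq_add_neg, ← C_1, ← C_neg, coeff_X_add_C_pow]
  rcases le_or_gt k n with hk | hk
  · rw [show n + k = n - k + 2 * k by omega, pow_add, pow_mul, neg_one_sq, one_pow, mul_one]
  · simp [Nat.choose_eq_zero_of_lt hk]

theorem coeff_iterate_derivative_X_pow_mul {R : Type*} [Semiring R] (p : R[X]) (m n k : ℕ) :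
    (derivative^[n] (X ^ (m + n) * p)).coeff (k + m) =
      (m + n + k).descFactorial n • p.coeff k := by
  rw [coeff_iterate_derivative, show k + m + n = k + (m + n) by ring, coeff_X_pow_mul,
    add_comm k]

theorem coeff_rodrigues {K : Type*} [Field K] [CharZero K] (m n k : ℕ) :
    (C (1 / (n.factorial : K)) * derivative^[n] (X ^ (m + n) * (X - 1) ^ n)).coeff (k + m) =
      (-1) ^ (n + k) * (n.choose k : K) * ((m + n + k).choose n : K) := by
  rw [coeff_C_mul, coeff_iterate_derivative_X_pow_mul, nsmul_eq_mul,
    Nat.descFactorial_eq_factorial_mul_choose, coeff_X_sub_one_pow]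
  have : (n.factorial : K) ≠ 0 := Nat.cast_ne_zero.mpr n.factorial_ne_zero
  push_cast
  field_simp

theorem stmt_4_general (P : ℕ → ℕ → Polynomial ℝ)
    (hP0 : ∀ m, P m 0 = 1)
    (hP : ∀ m n, 1 ≤ n →
      (X : Polynomial ℝ) ^ m * P m n
        = C (1 / (n.factorial : ℝ)) *
            derivative^[n] (X ^ (m + n) * (X - 1) ^ n))
    (m n k : ℕ) :
    (P m n).coeff k
      = (-1 : ℝ) ^ (n + k) * (Nat.choose n k : ℝ) * (Nat.choose (m + n + k) n : ℝ) := by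
  rcases Nat.eq_zero_or_pos n with rfl | hn
  · rcases k with _ | k <;> simp [hP0, coeff_one]
  · rw [← coeff_X_pow_mul (P m n) m k, hP m n hn, coeff_rodrigues]

/-- The coefficient of `x^k` in `P m n` equals `(-1)^(n+k) · C(n,k) · C(m+n+k, n)`. -/
theorem stmt_4 (P : ℕ → ℕ → Polynomial ℝ)
    (hP0 : ∀ m, P m 0 = 1)
    (hP : ∀ m n, 1 ≤ n →
      (X : Polynomial ℝ) ^ m * P m n
        = C (1 / (n.factorial : ℝ)) *
            derivative^[n] (X ^ (m + n) * (X - 1) ^ n))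
    (m n k : ℕ) (hk : k ≤ n) :
    (P m n).coeff k
      = (-1 : ℝ) ^ (n + k) * (Nat.choose n k : ℝ) * (Nat.choose (m + n + k) n : ℝ) :=
  stmt_4_general P hP0 hP m n k
end

section
/- For every integer m ≥ 0 and all integers n ≠ k with n, k ≥ 0, the polynomials P_{m,n} and P_{m,k} are orthogonal with respect to the weight x^m on [0,1]: ∫_0^1 x^m · P_{m,n}(x) · P_{m,k}(x) dx = 0. -/
/-!
Write `f = X^(m+n) (X-1)^n`, so that `x^m P_{m,n} = f⁽ⁿ⁾ / n!`. Since `f` vanishes to order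
`n` at both `0` and `1`, integrating by parts `n` times moves all derivatives from `f` onto
`P_{m,k}` without boundary terms. For `k < n` the polynomial `P_{m,k}` has degree at most `k`,
so its `n`-th derivative is zero.
-/

open Polynomial intervalIntegral

namespace Polynomial

theorem integral_eval_mul_derivative (p q : ℝ[X]) (a b : ℝ) :
    ∫ x in a..b, (q * derivative p).eval x
      = q.eval b * p.eval b - q.eval a * p.eval a - ∫ x in a..b, (derivative q * p).eval x := by
  simp only [eval_mul]
  exact integral_mul_deriv_eq_deriv_mul (fun x _ => q.hasDerivAt x) (fun x _ => p.hasDerivAt x)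
    ((derivative q).continuous.intervalIntegrable a b)
    ((derivative p).continuous.intervalIntegrable a b)

theorem eval_iterate_derivative_eq_zero_of_pow_dvd {R : Type*} [CommRing R] {f : R[X]} {a : R}
    {n j : ℕ}
    (hf : (X - C a) ^ n ∣ f) (hj : j < n) : (derivative^[j] f).eval a = 0 :=
  dvd_iff_isRoot.mp <| (dvd_pow_self _ (Nat.sub_ne_zero_of_lt hj)).trans
    (pow_sub_dvd_iterate_derivative_of_pow_dvd j hf)

theorem integral_eval_mul_iterate_derivative {f : ℝ[X]} {a b : ℝ} {n : ℕ}
    (ha : (X - C a) ^ n ∣ f) (hb : (X - C b) ^ n ∣ f) (q : ℝ[X]) :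
    ∫ x in a..b, (q * derivative^[n] f).eval x
      = (-1) ^ n * ∫ x in a..b, (derivative^[n] q * f).eval x := by
  induction n generalizing q with
  | zero => simp
  | succ n ih =>
    have ha' := (pow_dvd_pow _ n.le_succ).trans ha
    have hb' := (pow_dvd_pow _ n.le_succ).trans hb
    rw [Function.iterate_succ_apply', integral_eval_mul_derivative,
      eval_iterate_derivative_eq_zero_of_pow_dvd ha n.lt_succ_self,
      eval_iterate_derivative_eq_zero_of_pow_dvd hb n.lt_succ_self, ih ha' hb',
      ← Function.iterate_succ_apply]
    ring

theorem integral_eval_mul_iterate_derivative_eq_zero {f q : ℝ[X]} {a b : ℝ} {n : ℕ}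
    (ha : (X - C a) ^ n ∣ f) (hb : (X - C b) ^ n ∣ f) (hq : q.natDegree < n) :
    ∫ x in a..b, (q * derivative^[n] f).eval x = 0 := by
  rw [integral_eval_mul_iterate_derivative ha hb, iterate_derivative_eq_zero hq]
  simp

theorem natDegree_le_of_natDegree_X_pow_mul_le {R : Type*} [Semiring R] [Nontrivial R]
    {p : R[X]} {m k : ℕ} (h : (X ^ m * p).natDegree ≤ m + k) : p.natDegree ≤ k := by
  rcases eq_or_ne p 0 with rfl | hp
  · simp
  rw [natDegree_X_pow_mul m hp] at h
  omega

theorem natDegree_iterate_derivative_X_pow_mul_X_sub_one_pow_le {R : Type*} [CommRing R]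
    (m n : ℕ) : (derivative^[n] (X ^ (m + n) * (X - 1) ^ n : R[X])).natDegree ≤ m + n := by
  have hf : (X ^ (m + n) * (X - 1) ^ n : R[X]).natDegree ≤ m + n + n :=
    natDegree_mul_le_of_le (natDegree_X_pow_le _)
      ((natDegree_pow_le_of_le n (by simpa using natDegree_X_sub_C_le (1 : R))).trans
        (mul_one n).le)
  have := natDegree_iterate_derivative (X ^ (m + n) * (X - 1) ^ n : R[X]) n
  omega

end Polynomial

/-- Orthogonality of the polynomials `P m n` with respect to the weight `x^m`
on `[0,1]`. -/
theorem stmt_5 (P : ℕ → ℕ → Polynomial ℝ)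
    (hP0 : ∀ m, P m 0 = 1)
    (hP : ∀ m n, 1 ≤ n →
      (X : Polynomial ℝ) ^ m * P m n
        = C (1 / (n.factorial : ℝ)) *
            derivative^[n] (X ^ (m + n) * (X - 1) ^ n))
    (m n k : ℕ) (hnk : n ≠ k) :
    ∫ x in (0:ℝ)..1, x ^ m * ((P m n).eval x * (P m k).eval x) = 0 := by
  wlog hkn : k < n generalizing n k
  · simpa only [mul_comm] using this k n hnk.symm (by omega)
  have hdeg : (P m k).natDegree ≤ k := by
    rcases k.eq_zero_or_pos with rfl | hk
    · simp [hP0]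
    apply natDegree_le_of_natDegree_X_pow_mul_le (m := m)
    rw [hP m k hk]
    exact (natDegree_C_mul_le _ _).trans
      (natDegree_iterate_derivative_X_pow_mul_X_sub_one_pow_le m k)
  set f : ℝ[X] := X ^ (m + n) * (X - 1) ^ n with hf
  have hweight : ∀ x : ℝ, x ^ m * ((P m n).eval x * (P m k).eval x)
      = 1 / (n.factorial : ℝ) * (P m k * derivative^[n] f).eval x := by
    intro x
    have := congrArg (eval x) (hP m n (by omega))
    simp only [eval_mul, eval_pow, eval_X, eval_C] at this ⊢
    rw [← mul_assoc, this]
    ring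
  have hf0 : (X - C 0) ^ n ∣ f := by
    rw [map_zero, sub_zero, hf]
    exact (pow_dvd_pow X (Nat.le_add_left n m)).mul_right _
  have hf1 : (X - C 1) ^ n ∣ f := by
    rw [map_one, hf]
    exact dvd_mul_left _ _
  simp_rw [hweight, integral_const_mul,
    integral_eval_mul_iterate_derivative_eq_zero hf0 hf1 (hdeg.trans_lt hkn), mul_zero]
end

section
/- Let m ≥ 0 be an integer and a < b real numbers, and define p_{m,n}(t) = P_{m,n}((t-a)/(b-a)). Then for all integers n ≠ k with n, k ≥ 0, ∫_a^b ((t-a)/(b-a))^m · p_{m,n}(t) · p_{m,k}(t) dt = 0; moreover ∫_a^b ((t-a)/(b-a))^m · p_{m,n}(t)² dt = (b-a)/(m+2n+1), p_{m,n}(a) = (-1)^n · C(m+n,n), and p_{m,n}(b) = 1. -/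
/-!
Write `K = X^(m+n) (X-1)^n`, so that `X^m P_{m,n} = K^(n) / n!`. Since `K` vanishes to order `n`
at `0` and at `1`, integrating `n` times by parts over `[0,1]` moves all derivatives onto the
other factor: `∫₀¹ x^m P_{m,n} q = (-1)^n / n! ∫₀¹ K q^(n)`. This kills every `q` of degree `< n`,
and for `q = P_{m,n}` the derivative `q^(n)` is a constant, leaving the Beta integral
`∫₀¹ x^(m+n) (x-1)^n dx = (-1)^n (m+n)! n! / (m+2n+1)!`. The endpoint values come from the
lowest coefficient of `K^(n)` and from the Leibniz rule at `1`; an affine change of variables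
transports everything from `[0,1]` to `[a,b]`.
-/

open Polynomial MeasureTheory intervalIntegral

open scoped Nat

namespace Polynomial

variable {R : Type*} [CommRing R]

theorem isRoot_iterate_derivative_of_pow_dvd {p : R[X]} {a : R} {n k : ℕ}
    (h : (X - C a) ^ n ∣ p) (hk : k < n) : (derivative^[k] p).IsRoot a :=
  dvd_iff_isRoot.mp <| (dvd_pow_self _ (Nat.sub_ne_zero_of_lt hk)).trans
    (pow_sub_dvd_iterate_derivative_of_pow_dvd k h)

theorem eval_iterate_derivative_X_sub_C_pow_mul (a : R) (n : ℕ) (q : R[X]) :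
    (derivative^[n] ((X - C a) ^ n * q)).eval a = n ! * q.eval a := by
  rw [iterate_derivative_mul, eval_finsetSum,
    Finset.sum_eq_single_of_mem 0 (Finset.mem_range.mpr n.succ_pos)]
  · simp [iterate_derivative_X_sub_pow_self]
  · intro k hk hk0
    rw [iterate_derivative_X_sub_pow, Nat.sub_sub_self (Finset.mem_range_succ_iff.mp hk)]
    simp [zero_pow hk0]

theorem iterate_derivative_eq_C_of_natDegree_le {p : R[X]} {n : ℕ} (h : p.natDegree ≤ n) :
    derivative^[n] p = C (n ! * p.coeff n) := by
  rw [eq_C_of_natDegree_le_zero ((natDegree_iterate_derivative p n).trans (by omega)),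
    coeff_iterate_derivative, zero_add, Nat.descFactorial_self, nsmul_eq_mul]

end Polynomial

theorem intervalIntegral.integral_comp_sub_div_sub {E : Type*} [NormedAddCommGroup E]
    [NormedSpace ℝ E] (f : ℝ → E) {a b : ℝ} (hab : a ≠ b) :
    ∫ t in a..b, f ((t - a) / (b - a)) = (b - a) • ∫ x in (0 : ℝ)..1, f x := by
  have hba : b - a ≠ 0 := sub_ne_zero.mpr hab.symm
  simp_rw [sub_div]
  rw [integral_comp_div_sub f hba, sub_self, ← sub_div, div_self hba]

noncomputable def unitIntegral : ℝ[X] →ₗ[ℝ] ℝ where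
  toFun q := ∫ x in (0 : ℝ)..1, q.eval x
  map_add' p q := by
    simpa using integral_add (p.continuous.intervalIntegrable 0 1)
      (q.continuous.intervalIntegrable 0 1)
  map_smul' c q := by simp

theorem unitIntegral_apply (q : ℝ[X]) : unitIntegral q = ∫ x in (0 : ℝ)..1, q.eval x := rfl

theorem unitIntegral_C_mul (c : ℝ) (q : ℝ[X]) : unitIntegral (C c * q) = c * unitIntegral q := by
  rw [C_mul', map_smul, smul_eq_mul]

theorem unitIntegral_derivative (q : ℝ[X]) :
    unitIntegral (derivative q) = q.eval 1 - q.eval 0 :=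
  integral_eq_sub_of_hasDerivAt (fun x _ => q.hasDerivAt x)
    ((derivative q).continuous.intervalIntegrable 0 1)

theorem unitIntegral_derivative_mul (u v : ℝ[X]) :
    unitIntegral (derivative u * v) =
      u.eval 1 * v.eval 1 - u.eval 0 * v.eval 0 - unitIntegral (u * derivative v) := by
  have h := unitIntegral_derivative (u * v)
  rw [derivative_mul, map_add, eval_mul, eval_mul] at h
  linarith

theorem unitIntegral_iterate_derivative_mul {F : ℝ[X]} {n : ℕ}
    (h0 : ∀ k < n, (derivative^[k] F).IsRoot 0) (h1 : ∀ k < n, (derivative^[k] F).IsRoot 1)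
    (q : ℝ[X]) :
    unitIntegral (derivative^[n] F * q) = (-1) ^ n * unitIntegral (F * derivative^[n] q) := by
  induction n generalizing q with
  | zero => simp
  | succ n ih =>
    rw [Function.iterate_succ_apply', unitIntegral_derivative_mul, (h0 n n.lt_succ_self).eq_zero,
      (h1 n n.lt_succ_self).eq_zero,
      ih (fun k hk => h0 k (by omega)) (fun k hk => h1 k (by omega)), Function.iterate_succ_apply]
    ring

theorem factorial_mul_unitIntegral_X_pow_mul_X_sub_one_pow (s r : ℕ) :
    ((s + r + 1)! : ℝ) * unitIntegral (X ^ s * (X - 1) ^ r) = (-1) ^ r * s ! * r ! := by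
  induction r generalizing s with
  | zero =>
    rw [unitIntegral_apply]
    simp [integral_pow, Nat.factorial_succ]
    field_simp
  | succ r ih =>
    have hibp : ((s : ℝ) + 1) * unitIntegral (X ^ s * (X - 1) ^ (r + 1)) =
        -(((r : ℝ) + 1) * unitIntegral (X ^ (s + 1) * (X - 1) ^ r)) := by
      have h := unitIntegral_derivative_mul (X ^ (s + 1)) ((X - 1) ^ (r + 1))
      rw [derivative_X_pow_succ, derivative_pow_succ] at h
      simp only [derivative_sub, derivative_X, derivative_one, sub_zero, mul_one, mul_assoc,
        unitIntegral_C_mul, mul_left_comm (X ^ (s + 1)) (C _)] at h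
      simpa using h
    have ih' := ih (s + 1)
    rw [Nat.factorial_succ s] at ih'
    rw [show s + (r + 1) + 1 = s + 1 + r + 1 by ring, Nat.factorial_succ r]
    apply mul_left_cancel₀ (show (s : ℝ) + 1 ≠ 0 by positivity)
    push_cast at ih' ⊢
    linear_combination ((s + 1 + r + 1)! : ℝ) * hibp - ((r : ℝ) + 1) * ih'

noncomputable def rodriguesKernel (m n : ℕ) : ℝ[X] := X ^ (m + n) * (X - 1) ^ n

theorem isRoot_iterate_derivative_rodriguesKernel_zero {m n k : ℕ} (hk : k < n) :
    (derivative^[k] (rodriguesKernel m n)).IsRoot 0 :=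
  isRoot_iterate_derivative_of_pow_dvd (n := n) (by
    rw [C_0, sub_zero, rodriguesKernel]
    exact (pow_dvd_pow X (by omega)).mul_right _) hk

theorem isRoot_iterate_derivative_rodriguesKernel_one {m n k : ℕ} (hk : k < n) :
    (derivative^[k] (rodriguesKernel m n)).IsRoot 1 :=
  isRoot_iterate_derivative_of_pow_dvd (n := n) (by
    rw [C_1, rodriguesKernel]
    exact dvd_mul_left _ _) hk

theorem eval_one_iterate_derivative_rodriguesKernel (m n : ℕ) :
    (derivative^[n] (rodriguesKernel m n)).eval 1 = n ! := by
  rw [rodriguesKernel, mul_comm, ← C_1, eval_iterate_derivative_X_sub_C_pow_mul]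
  simp

theorem coeff_add_rodriguesKernel (m n j : ℕ) :
    (rodriguesKernel m n).coeff (j + (m + n)) = (-1) ^ (n - j) * n.choose j := by
  rw [rodriguesKernel, coeff_X_pow_mul, sub_eq_add_neg, ← C_1, ← C_neg, coeff_X_add_C_pow]

theorem natDegree_rodriguesKernel_le (m n : ℕ) : (rodriguesKernel m n).natDegree ≤ m + 2 * n := by
  unfold rodriguesKernel
  compute_degree
  omega

theorem factorial_mul_unitIntegral_rodriguesKernel (m n : ℕ) :
    ((m + 2 * n + 1)! : ℝ) * unitIntegral (rodriguesKernel m n) = (-1) ^ n * (m + n)! * n ! := by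
  rw [← factorial_mul_unitIntegral_X_pow_mul_X_sub_one_pow, rodriguesKernel]
  ring_nf

/-- `Q n` is `P_{m,n}` for every `n`, the case `n = 0` included since `rodriguesKernel m 0 = X ^ m`. -/
def IsRodriguesFamily (m : ℕ) (Q : ℕ → ℝ[X]) : Prop :=
  ∀ n, X ^ m * Q n = C (1 / (n ! : ℝ)) * derivative^[n] (rodriguesKernel m n)

namespace IsRodriguesFamily

variable {m : ℕ} {Q : ℕ → ℝ[X]}

theorem coeff_eq (hQ : IsRodriguesFamily m Q) (n j : ℕ) :
    (Q n).coeff j =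
      (j + (m + n)).descFactorial n / n ! * (rodriguesKernel m n).coeff (j + (m + n)) := by
  have h := congrArg (coeff · (j + m)) (hQ n)
  simp only [coeff_X_pow_mul, coeff_C_mul, coeff_iterate_derivative, nsmul_eq_mul, add_assoc] at h
  rw [h]
  ring

theorem natDegree_le (hQ : IsRodriguesFamily m Q) (n : ℕ) : (Q n).natDegree ≤ n := by
  refine natDegree_le_iff_coeff_eq_zero.mpr fun j hj => ?_
  rw [hQ.coeff_eq, coeff_eq_zero_of_natDegree_lt
    ((natDegree_rodriguesKernel_le m n).trans_lt (by omega)), mul_zero]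

theorem coeff_zero (hQ : IsRodriguesFamily m Q) (n : ℕ) :
    (Q n).coeff 0 = (-1) ^ n * (m + n).choose n := by
  rw [hQ.coeff_eq, coeff_add_rodriguesKernel, zero_add, Nat.descFactorial_eq_factorial_mul_choose]
  push_cast
  field_simp
  simp

theorem factorial_mul_coeff_self (hQ : IsRodriguesFamily m Q) (n : ℕ) :
    (n ! : ℝ) * (Q n).coeff n = (m + 2 * n).descFactorial n := by
  rw [hQ.coeff_eq, coeff_add_rodriguesKernel, show n + (m + n) = m + 2 * n by ring]
  field_simp
  simp

theorem eval_one (hQ : IsRodriguesFamily m Q) (n : ℕ) : (Q n).eval 1 = 1 := by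
  have h := congrArg (eval 1) (hQ n)
  simp only [eval_mul, eval_pow, eval_X, one_pow, one_mul, eval_C,
    eval_one_iterate_derivative_rodriguesKernel] at h
  rw [h]
  field_simp

theorem unitIntegral_X_pow_mul_mul (hQ : IsRodriguesFamily m Q) (n : ℕ) (q : ℝ[X]) :
    unitIntegral (X ^ m * Q n * q) =
      (-1) ^ n / n ! * unitIntegral (rodriguesKernel m n * derivative^[n] q) := by
  rw [hQ n, mul_assoc, unitIntegral_C_mul,
    unitIntegral_iterate_derivative_mul (fun _ => isRoot_iterate_derivative_rodriguesKernel_zero)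
      (fun _ => isRoot_iterate_derivative_rodriguesKernel_one)]
  ring

theorem unitIntegral_orthogonal (hQ : IsRodriguesFamily m Q) {n k : ℕ} (hkn : k < n) :
    unitIntegral (X ^ m * Q n * Q k) = 0 := by
  rw [hQ.unitIntegral_X_pow_mul_mul, iterate_derivative_eq_zero ((hQ.natDegree_le k).trans_lt hkn),
    mul_zero, map_zero, mul_zero]

theorem unitIntegral_self (hQ : IsRodriguesFamily m Q) (n : ℕ) :
    unitIntegral (X ^ m * Q n * Q n) = 1 / ((m : ℝ) + 2 * n + 1) := by
  have hfac : ((m + n)! : ℝ) * (m + 2 * n).descFactorial n = (m + 2 * n)! := by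
    rw [← Nat.factorial_mul_descFactorial (show n ≤ m + 2 * n by omega),
      show m + 2 * n - n = m + n by omega]
    push_cast
    ring
  have hK := factorial_mul_unitIntegral_rodriguesKernel m n
  rw [hQ.unitIntegral_X_pow_mul_mul, iterate_derivative_eq_C_of_natDegree_le (hQ.natDegree_le n),
    hQ.factorial_mul_coeff_self, mul_comm (rodriguesKernel m n), unitIntegral_C_mul]
  rw [Nat.factorial_succ] at hK
  push_cast at hK
  have hsign : ((-1 : ℝ) ^ n) * (-1) ^ n = 1 := by rw [← mul_pow]; norm_num
  field_simp
  apply mul_left_cancel₀ (show ((m + 2 * n)! : ℝ) ≠ 0 by positivity)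
  linear_combination (-1) ^ n * ((m + 2 * n).descFactorial n : ℝ) * hK
    + ((m + 2 * n).descFactorial n * (m + n)! * n ! : ℝ) * hsign + (n ! : ℝ) * hfac

end IsRodriguesFamily

/-- Properties of the shifted polynomials `p_{m,n}(t) = P_{m,n}((t-a)/(b-a))` on
`[a,b]`: orthogonality with weight `((t-a)/(b-a))^m`, squared norm
`(b-a)/(m+2n+1)`, and endpoint values. -/
theorem stmt_9 (P : ℕ → ℕ → Polynomial ℝ)
    (hP0 : ∀ m, P m 0 = 1)
    (hP : ∀ m n, 1 ≤ n →
      (X : Polynomial ℝ) ^ m * P m n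
        = C (1 / (n.factorial : ℝ)) *
            derivative^[n] (X ^ (m + n) * (X - 1) ^ n))
    (m : ℕ) (a b : ℝ) (hab : a < b)
    (p : ℕ → ℝ → ℝ) (hp : ∀ n t, p n t = (P m n).eval ((t - a) / (b - a))) :
    (∀ n k : ℕ, n ≠ k →
        ∫ t in a..b, ((t - a) / (b - a)) ^ m * (p n t * p k t) = 0)
    ∧ (∀ n : ℕ,
        ∫ t in a..b, ((t - a) / (b - a)) ^ m * p n t ^ 2
          = (b - a) / ((m : ℝ) + 2 * n + 1))
    ∧ (∀ n : ℕ, p n a = (-1 : ℝ) ^ n * (Nat.choose (m + n) n : ℝ))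
    ∧ (∀ n : ℕ, p n b = 1) := by
  have hQ : IsRodriguesFamily m (P m) := fun n => by
    cases n with
    | zero => simp [hP0, rodriguesKernel]
    | succ n => exact hP m (n + 1) n.succ_pos
  have hweighted : ∀ q r : ℝ[X], ∫ t in a..b, ((t - a) / (b - a)) ^ m *
      (q.eval ((t - a) / (b - a)) * r.eval ((t - a) / (b - a))) =
        (b - a) * unitIntegral (X ^ m * q * r) := fun q r => by
    rw [integral_comp_sub_div_sub (fun x => x ^ m * (q.eval x * r.eval x)) hab.ne,
      unitIntegral_apply, smul_eq_mul]
    simp only [eval_mul, eval_pow, eval_X, mul_assoc]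
  refine ⟨fun n k hnk => ?_, fun n => ?_, fun n => ?_, fun n => ?_⟩
  · simp only [hp, hweighted]
    rcases hnk.lt_or_gt with h | h
    · rw [mul_right_comm, hQ.unitIntegral_orthogonal h, mul_zero]
    · rw [hQ.unitIntegral_orthogonal h, mul_zero]
  · simp only [hp, sq, hweighted, hQ.unitIntegral_self, mul_one_div]
  · rw [hp, sub_self, zero_div, ← coeff_zero_eq_eval_zero, hQ.coeff_zero]
  · rw [hp, div_self (sub_ne_zero.mpr hab.ne'), hQ.eval_one]
end

section
/- Let n ≥ 1 and let W be a symmetric positive semidefinite real n×n matrix, let m ≥ 0 be an integer, let a < b be real numbers and f : [a,b] → ℝ^n be continuous. Set w_0 = ∫_a^b ((s-a)/(b-a))^m f(s) ds and w_1 = ∫_a^b ((s-a)/(b-a))^m · ((m+2)·(s-a)/(b-a) − (m+1)) · f(s) ds. Then ∫_a^b ((s-a)/(b-a))^m · f(s)ᵀ W f(s) ds ≥ ((m+1)/(b-a)) · w_0ᵀ W w_0 + ((m+3)/(b-a)) · w_1ᵀ W w_1. -/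
/-!
For the weight `ρ(s) = ((s - a)/(b - a))^m` on `[a, b]`, the functions `1` and
`P(s) = (m + 2)(s - a)/(b - a) - (m + 1)` are orthogonal in `L²(ρ)`, with squared norms
`(b - a)/(m + 1)` and `(b - a)/(m + 3)`; indeed `x^m ((m + 2)x - (m + 1))` is the derivative
of `x^(m+1) (x - 1)`. The inequality is Bessel's inequality for this orthogonal pair, applied
to each linear form `uₖ ⬝ᵥ f` of a decomposition `W = ∑ₖ uₖ uₖᵀ` of the positive semidefinite
matrix `W`.
-/

open Matrix MeasureTheory intervalIntegral Finset

theorem Matrix.PosSemidef.exists_dotProduct_mulVec_eq_sum_sq {κ : Type*} [Fintype κ]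
    {W : Matrix κ κ ℝ} (hW : W.PosSemidef) :
    ∃ (r : ℕ) (u : Fin r → κ → ℝ), ∀ v, v ⬝ᵥ W *ᵥ v = ∑ k, (u k ⬝ᵥ v) ^ 2 := by
  obtain ⟨r, u, rfl⟩ := posSemidef_iff_eq_sum_vecMulVec.mp hW
  refine ⟨r, u, fun v => ?_⟩
  simp [sum_mulVec, dotProduct_sum, vecMulVec_mulVec, sq, dotProduct_comm]

theorem intervalIntegral.integral_mul_dotProduct {κ : Type*} [Fintype κ] {a b : ℝ}
    {ψ : ℝ → ℝ} {f : ℝ → κ → ℝ} (hf : ∀ k, IntervalIntegrable (fun s => ψ s * f s k) volume a b)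
    (u : κ → ℝ) :
    ∫ s in a..b, ψ s * (u ⬝ᵥ f s) = u ⬝ᵥ fun k => ∫ s in a..b, ψ s * f s k := by
  have hpt : ∀ s, ψ s * (u ⬝ᵥ f s) = ∑ k, u k * (ψ s * f s k) := fun s => by
    simp only [dotProduct, mul_sum, mul_left_comm]
  simp only [hpt]
  rw [integral_finsetSum fun k _ => (hf k).const_mul (u k)]
  simp only [intervalIntegral.integral_const_mul, dotProduct]

section WeightedBessel

variable {ι : Type*} [Fintype ι] {a b : ℝ} {ρ : ℝ → ℝ} {φ : ι → ℝ → ℝ}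

theorem integral_mul_sum_sq_of_pairwise_orthogonal (hab : a ≤ b)
    (hρc : ContinuousOn ρ (Set.Icc a b)) (hφ : ∀ i, ContinuousOn (φ i) (Set.Icc a b))
    (horth : Pairwise fun i j => ∫ s in a..b, ρ s * φ i s * φ j s = 0) (x : ι → ℝ) :
    ∫ s in a..b, ρ s * (∑ i, x i * φ i s) ^ 2 = ∑ i, x i ^ 2 * ∫ s in a..b, ρ s * φ i s ^ 2 := by
  classical
  have hpt : ∀ s, ρ s * (∑ i, x i * φ i s) ^ 2
      = ∑ i, ∑ j, x i * x j * (ρ s * φ i s * φ j s) := fun s => by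
    rw [sq, sum_mul_sum, mul_sum]
    exact sum_congr rfl fun i _ => by rw [mul_sum]; exact sum_congr rfl fun j _ => by ring
  simp only [hpt]
  rw [integral_finsetSum fun i _ => ContinuousOn.intervalIntegrable_of_Icc hab (by fun_prop)]
  refine sum_congr rfl fun i _ => ?_
  rw [integral_finsetSum fun j _ => ContinuousOn.intervalIntegrable_of_Icc hab (by fun_prop),
    sum_eq_single i (fun j _ hji => by
      rw [intervalIntegral.integral_const_mul, horth hji.symm, mul_zero]) (by simp),
    intervalIntegral.integral_const_mul]
  simp only [sq, mul_assoc]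

theorem sum_sq_integral_div_le_integral_sq {h : ℝ → ℝ} (hab : a ≤ b)
    (hρ : ∀ s ∈ Set.Icc a b, 0 ≤ ρ s) (hρc : ContinuousOn ρ (Set.Icc a b))
    (hφ : ∀ i, ContinuousOn (φ i) (Set.Icc a b)) (hh : ContinuousOn h (Set.Icc a b))
    (horth : Pairwise fun i j => ∫ s in a..b, ρ s * φ i s * φ j s = 0) :
    ∑ i, (∫ s in a..b, ρ s * φ i s * h s) ^ 2 / (∫ s in a..b, ρ s * φ i s ^ 2)
      ≤ ∫ s in a..b, ρ s * h s ^ 2 := by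
  set A : ι → ℝ := fun i => ∫ s in a..b, ρ s * φ i s * h s
  set c : ι → ℝ := fun i => ∫ s in a..b, ρ s * φ i s ^ 2
  set x : ι → ℝ := fun i => A i / c i
  -- `p` is the projection of `h` onto the span of the `φ i`; expand `0 ≤ ∫ ρ (h - p)²`.
  set p : ℝ → ℝ := fun s => ∑ i, x i * φ i s
  have hpc : ContinuousOn p (Set.Icc a b) := by fun_prop
  have hcross : ∫ s in a..b, ρ s * h s * p s = ∑ i, x i * A i := by
    simp only [p, mul_sum]
    rw [integral_finsetSum fun i _ => ContinuousOn.intervalIntegrable_of_Icc hab (by fun_prop)]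
    refine sum_congr rfl fun i _ => ?_
    rw [← intervalIntegral.integral_const_mul]
    congr 1 with s
    ring
  have hsq : ∫ s in a..b, ρ s * p s ^ 2 = ∑ i, x i ^ 2 * c i :=
    integral_mul_sum_sq_of_pairwise_orthogonal hab hρc hφ horth x
  have hexpand : ∫ s in a..b, ρ s * (h s - p s) ^ 2
      = (∫ s in a..b, ρ s * h s ^ 2) - 2 * (∫ s in a..b, ρ s * h s * p s)
        + ∫ s in a..b, ρ s * p s ^ 2 := by
    rw [← intervalIntegral.integral_const_mul,
      ← intervalIntegral.integral_sub (ContinuousOn.intervalIntegrable_of_Icc hab (by fun_prop))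
        (ContinuousOn.intervalIntegrable_of_Icc hab (by fun_prop)),
      ← intervalIntegral.integral_add (ContinuousOn.intervalIntegrable_of_Icc hab (by fun_prop))
        (ContinuousOn.intervalIntegrable_of_Icc hab (by fun_prop))]
    congr 1 with s
    ring
  have hnonneg : 0 ≤ ∫ s in a..b, ρ s * (h s - p s) ^ 2 :=
    integral_nonneg hab fun s hs => mul_nonneg (hρ s hs) (sq_nonneg _)
  -- When `c i = 0` also `x i = 0`, so the identities hold with `A i ^ 2 / c i = 0`.
  have hterm : ∀ i, x i * A i = A i ^ 2 / c i ∧ x i ^ 2 * c i = A i ^ 2 / c i := fun i => by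
    refine ⟨by ring, ?_⟩
    rcases eq_or_ne (c i) 0 with hc | hc
    · simp [x, hc]
    · simp only [x]
      field_simp
  rw [hexpand, hcross, hsq] at hnonneg
  simp only [fun i => (hterm i).1, fun i => (hterm i).2] at hnonneg
  linarith

theorem sum_dotProduct_mulVec_integral_div_le {κ : Type*} [Fintype κ] {W : Matrix κ κ ℝ}
    (hW : W.PosSemidef) {f : ℝ → κ → ℝ} {w : ι → κ → ℝ} (hab : a ≤ b)
    (hρ : ∀ s ∈ Set.Icc a b, 0 ≤ ρ s) (hρc : ContinuousOn ρ (Set.Icc a b))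
    (hφ : ∀ i, ContinuousOn (φ i) (Set.Icc a b)) (hf : ContinuousOn f (Set.Icc a b))
    (horth : Pairwise fun i j => ∫ s in a..b, ρ s * φ i s * φ j s = 0)
    (hw : ∀ i k, w i k = ∫ s in a..b, ρ s * φ i s * f s k) :
    ∑ i, (w i ⬝ᵥ W *ᵥ w i) / (∫ s in a..b, ρ s * φ i s ^ 2)
      ≤ ∫ s in a..b, ρ s * (f s ⬝ᵥ W *ᵥ f s) := by
  obtain ⟨r, u, hu⟩ := hW.exists_dotProduct_mulVec_eq_sum_sq
  have huf : ∀ k, ContinuousOn (fun s => u k ⬝ᵥ f s) (Set.Icc a b) := fun k =>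
    (continuous_const.dotProduct continuous_id).comp_continuousOn hf
  have hmoment : ∀ i k, u k ⬝ᵥ w i = ∫ s in a..b, ρ s * φ i s * (u k ⬝ᵥ f s) := fun i k => by
    rw [integral_mul_dotProduct fun j => ContinuousOn.intervalIntegrable_of_Icc hab (by fun_prop)]
    exact congrArg _ (funext (hw i))
  simp only [hu, sum_div, mul_sum]
  rw [sum_comm,
    integral_finsetSum fun k _ => ContinuousOn.intervalIntegrable_of_Icc hab (by fun_prop)]
  refine sum_le_sum fun k _ => ?_
  simp only [hmoment]
  exact sum_sq_integral_div_le_integral_sq hab hρ hρc hφ (huf k) horth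

end WeightedBessel

section Moments

variable {a b : ℝ}

theorem integral_comp_sub_div_sub (hab : a ≠ b) (g : ℝ → ℝ) :
    ∫ s in a..b, g ((s - a) / (b - a)) = (b - a) * ∫ x in (0 : ℝ)..1, g x := by
  have hc : b - a ≠ 0 := sub_ne_zero.mpr hab.symm
  rw [integral_comp_sub_right (fun t => g (t / (b - a))), integral_comp_div g hc, sub_self,
    zero_div, div_self hc, smul_eq_mul]

theorem integral_normalized_pow (hab : a ≠ b) (m : ℕ) :
    ∫ s in a..b, ((s - a) / (b - a)) ^ m = (b - a) / (m + 1) := by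
  rw [integral_comp_sub_div_sub hab (· ^ m), integral_pow]
  simp [div_eq_mul_inv]

theorem integral_normalized_pow_mul_affine (hab : a ≠ b) (m : ℕ) :
    ∫ s in a..b, ((s - a) / (b - a)) ^ m * (((m : ℝ) + 2) * ((s - a) / (b - a)) - (m + 1))
      = 0 := by
  have hderiv : ∀ x ∈ Set.uIcc (0 : ℝ) 1, HasDerivAt (fun x : ℝ => x ^ (m + 1) * (x - 1))
      (x ^ m * (((m : ℝ) + 2) * x - (m + 1))) x := fun x _ => by
    refine ((hasDerivAt_pow (m + 1) x).mul ((hasDerivAt_id x).sub_const 1)).congr_deriv ?_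
    simp only [Nat.cast_add, Nat.cast_one, add_tsub_cancel_right, id]
    ring
  rw [integral_comp_sub_div_sub hab (fun x => x ^ m * (((m : ℝ) + 2) * x - (m + 1))),
    integral_eq_sub_of_hasDerivAt hderiv (Continuous.intervalIntegrable (by fun_prop) _ _)]
  simp

theorem integral_normalized_pow_mul_affine_sq (hab : a ≠ b) (m : ℕ) :
    ∫ s in a..b, ((s - a) / (b - a)) ^ m * (((m : ℝ) + 2) * ((s - a) / (b - a)) - (m + 1)) ^ 2
      = (b - a) / (m + 3) := by
  have hexpand : ∀ x : ℝ, x ^ m * (((m : ℝ) + 2) * x - (m + 1)) ^ 2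
      = (m + 2) ^ 2 * x ^ (m + 2) - 2 * (m + 1) * (m + 2) * x ^ (m + 1) + (m + 1) ^ 2 * x ^ m :=
    fun x => by ring
  have hint : ∀ (k : ℕ) (c : ℝ), IntervalIntegrable (fun x : ℝ => c * x ^ k) volume 0 1 :=
    fun k c => Continuous.intervalIntegrable (by fun_prop) _ _
  rw [integral_comp_sub_div_sub hab (fun x => x ^ m * (((m : ℝ) + 2) * x - (m + 1)) ^ 2)]
  simp only [hexpand]
  rw [intervalIntegral.integral_add ((hint _ _).sub (hint _ _)) (hint _ _),
    intervalIntegral.integral_sub (hint _ _) (hint _ _)]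
  simp only [intervalIntegral.integral_const_mul, integral_pow]
  field_simp
  push_cast
  ring

end Moments

theorem stmt_11_general (n : ℕ)
    (W : Matrix (Fin n) (Fin n) ℝ) (hWsym : W.IsSymm)
    (hWpsd : ∀ v : Fin n → ℝ, 0 ≤ v ⬝ᵥ W.mulVec v)
    (m : ℕ) (a b : ℝ) (hab : a < b)
    (f : ℝ → Fin n → ℝ) (hf : ContinuousOn f (Set.Icc a b))
    (w₀ w₁ : Fin n → ℝ)
    (hw₀ : ∀ i, w₀ i = ∫ s in a..b, ((s - a) / (b - a)) ^ m * f s i)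
    (hw₁ : ∀ i, w₁ i =
      ∫ s in a..b, ((s - a) / (b - a)) ^ m *
        (((m : ℝ) + 2) * ((s - a) / (b - a)) - ((m : ℝ) + 1)) * f s i) :
    ((m : ℝ) + 1) / (b - a) * (w₀ ⬝ᵥ W.mulVec w₀)
        + ((m : ℝ) + 3) / (b - a) * (w₁ ⬝ᵥ W.mulVec w₁)
      ≤ ∫ s in a..b, ((s - a) / (b - a)) ^ m * (f s ⬝ᵥ W.mulVec (f s)) := by
  have hW : W.PosSemidef := .of_dotProduct_mulVec_nonneg hWsym (by simpa using hWpsd)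
  have hne : a ≠ b := hab.ne
  have hbessel := sum_dotProduct_mulVec_integral_div_le (ι := Fin 2) hW hab.le
    (ρ := fun s => ((s - a) / (b - a)) ^ m)
    (φ := ![fun _ => 1, fun s => ((m : ℝ) + 2) * ((s - a) / (b - a)) - ((m : ℝ) + 1)])
    (w := ![w₀, w₁])
    (fun s hs => pow_nonneg (div_nonneg (sub_nonneg.mpr hs.1) (sub_pos.mpr hab).le) m)
    (by fun_prop)
    (fun i => by
      fin_cases i <;> simp only [Fin.zero_eta, Fin.mk_one, cons_val_zero, cons_val_one] <;>
        fun_prop)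
    hf
    (fun i j hij => by
      fin_cases i <;> fin_cases j <;>
        simp only [Fin.zero_eta, Fin.mk_one, ne_eq, not_true_eq_false, cons_val_zero,
          cons_val_one, mul_one] at hij ⊢ <;>
        exact integral_normalized_pow_mul_affine hne m)
    (fun i k => by fin_cases i <;> simp [hw₀, hw₁])
  simp only [Fin.sum_univ_two, cons_val_zero, cons_val_one, one_pow, mul_one,
    integral_normalized_pow hne, integral_normalized_pow_mul_affine_sq hne] at hbessel
  convert hbessel using 2 <;> field_simp

/-- The two-term (ν = 1) multiple integral inequality: with
`w₀ = ∫_a^b ((s-a)/(b-a))^m f(s) ds` and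
`w₁ = ∫_a^b ((s-a)/(b-a))^m ((m+2)(s-a)/(b-a) − (m+1)) f(s) ds`,
`∫_a^b ((s-a)/(b-a))^m f(s)ᵀ W f(s) ds
  ≥ ((m+1)/(b-a)) w₀ᵀ W w₀ + ((m+3)/(b-a)) w₁ᵀ W w₁`. -/
theorem stmt_11 (n : ℕ) (hn : 1 ≤ n)
    (W : Matrix (Fin n) (Fin n) ℝ) (hWsym : W.IsSymm)
    (hWpsd : ∀ v : Fin n → ℝ, 0 ≤ v ⬝ᵥ W.mulVec v)
    (m : ℕ) (a b : ℝ) (hab : a < b)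
    (f : ℝ → Fin n → ℝ) (hf : ContinuousOn f (Set.Icc a b))
    (w₀ w₁ : Fin n → ℝ)
    (hw₀ : ∀ i, w₀ i = ∫ s in a..b, ((s - a) / (b - a)) ^ m * f s i)
    (hw₁ : ∀ i, w₁ i =
      ∫ s in a..b, ((s - a) / (b - a)) ^ m *
        (((m : ℝ) + 2) * ((s - a) / (b - a)) - ((m : ℝ) + 1)) * f s i) :
    ((m : ℝ) + 1) / (b - a) * (w₀ ⬝ᵥ W.mulVec w₀)
        + ((m : ℝ) + 3) / (b - a) * (w₁ ⬝ᵥ W.mulVec w₁)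
      ≤ ∫ s in a..b, ((s - a) / (b - a)) ^ m * (f s ⬝ᵥ W.mulVec (f s)) :=
  stmt_11_general n W hWsym hWpsd m a b hab f hf w₀ w₁ hw₀ hw₁
end

section
/- Let n ≥ 1 and let W be a symmetric positive semidefinite real n×n matrix, let a < b be real numbers and f : [a,b] → ℝ^n be continuously differentiable. Set θ_0 = f(b) − f(a) and θ_1 = f(b) + f(a) − (2/(b-a)) ∫_a^b f(s) ds. Then ∫_a^b f'(s)ᵀ W f'(s) ds ≥ (1/(b-a)) · θ_0ᵀ W θ_0 + (3/(b-a)) · θ_1ᵀ W θ_1. -/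
/-!
With `p` the degree-one Legendre polynomial of `[a, b]`, the functions `1` and `p` are orthogonal
on `[a, b]`, with `∫ 1 ^ 2 = b - a` and `∫ p ^ 2 = (b - a) / 3`, and (by the fundamental theorem
of calculus and integration by parts) `θ₀ = ∫ f'` and `θ₁ = ∫ p f'`. The inequality is then
Bessel's inequality for `f'` against `{1, p}` in the semi-inner product `(u, v) ↦ ∫ uᵀ W v`:
expand `0 ≤ ∫ (f' - x)ᵀ W (f' - x)` where `x` is the projection of `f'` on the span of `1` and `p`.
-/

open Matrix MeasureTheory intervalIntegral Set

theorem eval_intervalIntegral {ι E : Type*} [Fintype ι] [NormedAddCommGroup E]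
    [NormedSpace ℝ E] [CompleteSpace E] {a b : ℝ} {f : ℝ → ι → E}
    (hf : IntervalIntegrable f volume a b) (i : ι) :
    (∫ t in a..b, f t) i = ∫ t in a..b, f t i :=
  ((ContinuousLinearMap.proj (R := ℝ) (φ := fun _ => E) i).intervalIntegral_comp_comm hf).symm

section Bessel

variable {E : Type*} [NormedAddCommGroup E] [NormedSpace ℝ E]
  (B : E →L[ℝ] E →L[ℝ] ℝ) {a b : ℝ}

theorem intervalIntegrable_apply_of_continuousOn (hab : a ≤ b) {u v : ℝ → E}
    (hu : ContinuousOn u (Icc a b)) (hv : ContinuousOn v (Icc a b)) :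
    IntervalIntegrable (fun t => B (u t) (v t)) volume a b :=
  (B.continuous₂.comp_continuousOn (hu.prodMk hv)).intervalIntegrable_of_Icc hab

theorem integral_apply_sub_apply_sub (hab : a ≤ b) {u v : ℝ → E}
    (hu : ContinuousOn u (Icc a b)) (hv : ContinuousOn v (Icc a b)) :
    ∫ t in a..b, B (u t - v t) (u t - v t) =
      (∫ t in a..b, B (u t) (u t)) - (∫ t in a..b, B (u t) (v t))
        - ((∫ t in a..b, B (v t) (u t)) - ∫ t in a..b, B (v t) (v t)) := by
  have iuu := intervalIntegrable_apply_of_continuousOn B hab hu hu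
  have iuv := intervalIntegrable_apply_of_continuousOn B hab hu hv
  have ivu := intervalIntegrable_apply_of_continuousOn B hab hv hu
  have ivv := intervalIntegrable_apply_of_continuousOn B hab hv hv
  simp only [map_sub, _root_.sub_apply]
  rw [intervalIntegral.integral_sub (iuu.sub ivu) (iuv.sub ivv),
    intervalIntegral.integral_sub iuu ivu, intervalIntegral.integral_sub iuv ivv]
  ring

variable [CompleteSpace E]

theorem integral_mul_apply_left {φ : ℝ → ℝ} {g : ℝ → E}
    (h : IntervalIntegrable (fun t => φ t • g t) volume a b) (v : E) :
    ∫ t in a..b, φ t * B (g t) v = B (∫ t in a..b, φ t • g t) v := by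
  simpa using (B.flip v).intervalIntegral_comp_comm h

theorem integral_mul_apply_right {φ : ℝ → ℝ} {g : ℝ → E}
    (h : IntervalIntegrable (fun t => φ t • g t) volume a b) (v : E) :
    ∫ t in a..b, φ t * B v (g t) = B v (∫ t in a..b, φ t • g t) := by
  simpa using (B v).intervalIntegral_comp_comm h

theorem sum_apply_div_integral_sq_le_integral_apply (hB : ∀ v, 0 ≤ B v v) (hab : a ≤ b)
    {κ : Type*} [Fintype κ] {φ : κ → ℝ → ℝ} {g : ℝ → E} {θ : κ → E}
    (hφ : ∀ k, ContinuousOn (φ k) (Icc a b)) (hg : ContinuousOn g (Icc a b))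
    (horth : Pairwise fun k l => ∫ t in a..b, φ k t * φ l t = 0)
    (hθ : ∀ k, ∫ t in a..b, φ k t • g t = θ k) :
    ∑ k, B (θ k) (θ k) / ∫ t in a..b, φ k t ^ 2 ≤ ∫ t in a..b, B (g t) (g t) := by
  set c : κ → ℝ := fun k => ∫ t in a..b, φ k t ^ 2
  set S := ∑ k, B (θ k) (θ k) / c k
  set x : ℝ → E := fun t => ∑ k, (φ k t / c k) • θ k
  have hx : ContinuousOn x (Icc a b) := by fun_prop
  have hint : ∀ F : ℝ → ℝ, ContinuousOn F (Icc a b) → IntervalIntegrable F volume a b :=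
    fun F hF => hF.intervalIntegrable_of_Icc hab
  have hφg : ∀ k, IntervalIntegrable (fun t => φ k t • g t) volume a b :=
    fun k => ((hφ k).smul hg).intervalIntegrable_of_Icc hab
  have hgx : ∫ t in a..b, B (g t) (x t) = S := by
    simp only [x, map_sum, map_smul, smul_eq_mul, div_mul_eq_mul_div]
    rw [intervalIntegral.integral_finsetSum fun k _ => hint _ (by fun_prop)]
    refine Finset.sum_congr rfl fun k _ => ?_
    rw [intervalIntegral.integral_div, integral_mul_apply_left B (hφg k), hθ]
  have hxg : ∫ t in a..b, B (x t) (g t) = S := by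
    simp only [x, map_sum, map_smul, FunLike.coe_sum, Finset.sum_apply,
      FunLike.coe_smul, Pi.smul_apply, smul_eq_mul, div_mul_eq_mul_div]
    rw [intervalIntegral.integral_finsetSum fun k _ => hint _ (by fun_prop)]
    refine Finset.sum_congr rfl fun k _ => ?_
    rw [intervalIntegral.integral_div, integral_mul_apply_right B (hφg k), hθ]
  have hxx : ∫ t in a..b, B (x t) (x t) = S := by
    have hpt : ∀ t, B (x t) (x t) =
        ∑ k, ∑ l, B (θ l) (θ k) / (c k * c l) * (φ k t * φ l t) := by
      intro t
      simp only [x, map_sum, map_smul, FunLike.coe_sum, Finset.sum_apply, FunLike.coe_smul,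
        Pi.smul_apply, smul_eq_mul, Finset.mul_sum]
      refine Finset.sum_congr rfl fun k _ => Finset.sum_congr rfl fun l _ => ?_
      ring
    rw [intervalIntegral.integral_congr fun t _ => hpt t,
      intervalIntegral.integral_finsetSum fun k _ => hint _ (by fun_prop)]
    refine Finset.sum_congr rfl fun k _ => ?_
    rw [intervalIntegral.integral_finsetSum fun l _ => hint _ (by fun_prop),
      Fintype.sum_eq_single k fun l hl => by
        rw [intervalIntegral.integral_const_mul, horth hl.symm, mul_zero]]
    have hck : ∫ t in a..b, φ k t * φ k t = c k := by simp only [c, sq]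
    rw [intervalIntegral.integral_const_mul, hck]
    rcases eq_or_ne (c k) 0 with h | h
    · simp [h]
    · field_simp
  have hnonneg : 0 ≤ ∫ t in a..b, B (g t - x t) (g t - x t) :=
    integral_nonneg hab fun t _ => hB _
  rw [integral_apply_sub_apply_sub B hab hg hx] at hnonneg
  linarith

end Bessel

noncomputable def shiftedLegendreOne (a b t : ℝ) : ℝ := (2 * t - a - b) / (b - a)

section Legendre

variable {a b : ℝ}

theorem hasDerivAt_shiftedLegendreOne (t : ℝ) :
    HasDerivAt (shiftedLegendreOne a b) (2 / (b - a)) t := by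
  unfold shiftedLegendreOne
  simpa using (((hasDerivAt_id t).const_mul 2).sub_const a).sub_const b |>.div_const (b - a)

theorem continuous_shiftedLegendreOne : Continuous (shiftedLegendreOne a b) :=
  continuous_iff_continuousAt.2 fun t => (hasDerivAt_shiftedLegendreOne t).continuousAt

theorem shiftedLegendreOne_left (hab : a ≠ b) : shiftedLegendreOne a b a = -1 := by
  rw [shiftedLegendreOne, div_eq_iff (sub_ne_zero.2 hab.symm)]; ring

theorem shiftedLegendreOne_right (hab : a ≠ b) : shiftedLegendreOne a b b = 1 := by
  rw [shiftedLegendreOne, div_eq_iff (sub_ne_zero.2 hab.symm)]; ring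

theorem integral_shiftedLegendreOne_pow (hab : a ≠ b) (k : ℕ) :
    ∫ t in a..b, shiftedLegendreOne a b t ^ k =
      (b - a) * (1 - (-1) ^ (k + 1)) / (2 * (k + 1)) := by
  have hba : b - a ≠ 0 := sub_ne_zero.2 hab.symm
  have hderiv : ∀ t ∈ uIcc a b, HasDerivAt
      (fun t => (b - a) / (2 * (k + 1)) * shiftedLegendreOne a b t ^ (k + 1))
      (shiftedLegendreOne a b t ^ k) t := by
    intro t _
    refine (((hasDerivAt_shiftedLegendreOne t).pow (k + 1)).const_mul _).congr_deriv ?_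
    field_simp
    push_cast
    ring
  rw [integral_eq_sub_of_hasDerivAt hderiv
    ((continuous_shiftedLegendreOne.pow k).intervalIntegrable _ _),
    shiftedLegendreOne_left hab, shiftedLegendreOne_right hab]
  ring

theorem integral_shiftedLegendreOne (hab : a ≠ b) :
    ∫ t in a..b, shiftedLegendreOne a b t = 0 := by
  simpa using integral_shiftedLegendreOne_pow hab 1

theorem integral_shiftedLegendreOne_sq (hab : a ≠ b) :
    ∫ t in a..b, shiftedLegendreOne a b t ^ 2 = (b - a) / 3 := by
  rw [integral_shiftedLegendreOne_pow hab]
  ring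

theorem integral_shiftedLegendreOne_smul_deriv {E : Type*} [NormedAddCommGroup E]
    [NormedSpace ℝ E] [CompleteSpace E] (hab : a ≠ b) {f f' : ℝ → E}
    (hf : ∀ t ∈ uIcc a b, HasDerivAt f (f' t) t) (hf' : IntervalIntegrable f' volume a b) :
    ∫ t in a..b, shiftedLegendreOne a b t • f' t =
      f b + f a - (2 / (b - a)) • ∫ t in a..b, f t := by
  rw [integral_smul_deriv_eq_deriv_smul (fun t _ => hasDerivAt_shiftedLegendreOne t) hf
    intervalIntegrable_const hf', intervalIntegral.integral_smul,
    shiftedLegendreOne_left hab, shiftedLegendreOne_right hab, one_smul, neg_one_smul,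
    sub_neg_eq_add]

end Legendre

theorem stmt_14_general (n : ℕ)
    (W : Matrix (Fin n) (Fin n) ℝ)
    (hWpsd : ∀ v : Fin n → ℝ, 0 ≤ v ⬝ᵥ W.mulVec v)
    (a b : ℝ) (hab : a < b)
    (f f' : ℝ → Fin n → ℝ)
    (hf : ∀ s ∈ Set.Icc a b, HasDerivAt f (f' s) s)
    (hf' : ContinuousOn f' (Set.Icc a b))
    (θ₀ θ₁ : Fin n → ℝ)
    (hθ₀ : ∀ i, θ₀ i = f b i - f a i)
    (hθ₁ : ∀ i, θ₁ i = f b i + f a i - (2 / (b - a)) * ∫ s in a..b, f s i) :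
    (1 / (b - a)) * (θ₀ ⬝ᵥ W.mulVec θ₀) + (3 / (b - a)) * (θ₁ ⬝ᵥ W.mulVec θ₁)
      ≤ ∫ s in a..b, f' s ⬝ᵥ W.mulVec (f' s) := by
  set B := (Matrix.toBilin' W).toContinuousBilinearMap
  have hB : ∀ u v, B u v = u ⬝ᵥ W *ᵥ v := Matrix.toBilin'_apply' W
  have hderiv : ∀ s ∈ uIcc a b, HasDerivAt f (f' s) s := by rwa [uIcc_of_le hab.le]
  have hf'int : IntervalIntegrable f' volume a b := hf'.intervalIntegrable_of_Icc hab.le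
  have hθ₀' : ∫ s in a..b, (1 : ℝ) • f' s = θ₀ := by
    simp only [one_smul, integral_eq_sub_of_hasDerivAt hderiv hf'int]
    exact (funext hθ₀).symm
  have hθ₁' : ∫ s in a..b, shiftedLegendreOne a b s • f' s = θ₁ := by
    rw [integral_shiftedLegendreOne_smul_deriv hab.ne hderiv hf'int]
    ext i
    simp [hθ₁ i, eval_intervalIntegral (HasDerivAt.continuousOn hderiv).intervalIntegrable]
  have key := sum_apply_div_integral_sq_le_integral_apply B (fun v => (hB v v).symm ▸ hWpsd v)
    hab.le (φ := ![fun _ => 1, shiftedLegendreOne a b]) (θ := ![θ₀, θ₁])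
    (Fin.forall_fin_two.2 ⟨continuousOn_const, continuous_shiftedLegendreOne.continuousOn⟩) hf'
    (fun k l hkl => by
      fin_cases k <;> fin_cases l <;> simp_all [integral_shiftedLegendreOne hab.ne])
    (Fin.forall_fin_two.2 ⟨hθ₀', hθ₁'⟩)
  simp only [Fin.sum_univ_two, Matrix.cons_val_zero, Matrix.cons_val_one, hB, one_pow,
    integral_one, integral_shiftedLegendreOne_sq hab.ne] at key
  convert key using 2
  · ring
  · field_simp

/-- Wirtinger-based integral inequality (case m = 0, ν = 1 of Lemma 3): with
`θ₀ = f(b) − f(a)` and `θ₁ = f(b) + f(a) − (2/(b-a)) ∫_a^b f(s) ds`,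
`∫_a^b f'(s)ᵀ W f'(s) ds ≥ (1/(b-a)) θ₀ᵀ W θ₀ + (3/(b-a)) θ₁ᵀ W θ₁`. -/
theorem stmt_14 (n : ℕ) (hn : 1 ≤ n)
    (W : Matrix (Fin n) (Fin n) ℝ) (hWsym : W.IsSymm)
    (hWpsd : ∀ v : Fin n → ℝ, 0 ≤ v ⬝ᵥ W.mulVec v)
    (a b : ℝ) (hab : a < b)
    (f f' : ℝ → Fin n → ℝ)
    (hf : ∀ s ∈ Set.Icc a b, HasDerivAt f (f' s) s)
    (hf' : ContinuousOn f' (Set.Icc a b))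
    (θ₀ θ₁ : Fin n → ℝ)
    (hθ₀ : ∀ i, θ₀ i = f b i - f a i)
    (hθ₁ : ∀ i, θ₁ i = f b i + f a i - (2 / (b - a)) * ∫ s in a..b, f s i) :
    (1 / (b - a)) * (θ₀ ⬝ᵥ W.mulVec θ₀) + (3 / (b - a)) * (θ₁ ⬝ᵥ W.mulVec θ₁)
      ≤ ∫ s in a..b, f' s ⬝ᵥ W.mulVec (f' s) :=
  stmt_14_general n W hWpsd a b hab f f' hf hf' θ₀ θ₁ hθ₀ hθ₁
end

section
/- Let n ≥ 1 and let W be a symmetric positive semidefinite real n×n matrix, let m ≥ 0 be an integer, let a < b be real numbers and f : [a,b] → ℝ^n be continuous. Then ∫_a^b ((s-a)/(b-a))^m · f(s)ᵀ W f(s) ds ≥ ((m+1)/(b-a)) · (∫_a^b ((s-a)/(b-a))^m f(s) ds)ᵀ · W · (∫_a^b ((s-a)/(b-a))^m f(s) ds). -/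
/-!
Completing the square. For a weight `w ≥ 0` with mass `t = ∫ w > 0` and `c = ∫ w f`, the
integral of `w (f - c/t)ᵀ W (f - c/t)` is nonnegative, and since `∫ w f = c` both cross terms
integrate to `cᵀ W c / t`, leaving `∫ w fᵀ W f - cᵀ W c / t ≥ 0`. The weight
`((s - a) / (b - a))^m` on `[a, b]` has mass `(b - a) / (m + 1)`.
-/

open Matrix MeasureTheory intervalIntegral

section

variable {α ι : Type*} [MeasurableSpace α] [Fintype ι] {μ : Measure α} {g : α → ι → ℝ}

theorem MeasureTheory.Integrable.dotProduct_const (hg : ∀ i, Integrable (fun x => g x i) μ)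
    (v : ι → ℝ) : Integrable (fun x => g x ⬝ᵥ v) μ :=
  integrable_finsetSum _ fun i _ => (hg i).mul_const (v i)

theorem integral_dotProduct_const (hg : ∀ i, Integrable (fun x => g x i) μ) (v : ι → ℝ) :
    ∫ x, g x ⬝ᵥ v ∂μ = (fun i => ∫ x, g x i ∂μ) ⬝ᵥ v := by
  simp only [dotProduct]
  rw [integral_finsetSum _ fun i _ => (hg i).mul_const (v i)]
  simp only [MeasureTheory.integral_mul_const]

theorem inv_integral_mul_quadForm_le_integral {W : Matrix ι ι ℝ}
    (hW : ∀ v, 0 ≤ v ⬝ᵥ W *ᵥ v) {w : α → ℝ}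
    (hw0 : 0 ≤ᵐ[μ] w) (hw : Integrable w μ) (hwg : ∀ i, Integrable (fun x => w x * g x i) μ)
    (hwq : Integrable (fun x => w x * (g x ⬝ᵥ W *ᵥ g x)) μ) (hpos : 0 < ∫ x, w x ∂μ) :
    (∫ x, w x ∂μ)⁻¹ * ((fun i => ∫ x, w x * g x i ∂μ) ⬝ᵥ W *ᵥ fun i => ∫ x, w x * g x i ∂μ)
      ≤ ∫ x, w x * (g x ⬝ᵥ W *ᵥ g x) ∂μ := by
  set t := ∫ x, w x ∂μ
  set c : ι → ℝ := fun i => ∫ x, w x * g x i ∂μ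
  have hwg' : ∀ i, Integrable (fun x => (w x • g x) i) μ := hwg
  have hexpand : ∀ x, w x * ((g x - t⁻¹ • c) ⬝ᵥ W *ᵥ (g x - t⁻¹ • c)) =
      w x * (g x ⬝ᵥ W *ᵥ g x) - t⁻¹ * ((w x • g x) ⬝ᵥ W *ᵥ c)
        - t⁻¹ * ((w x • g x) ⬝ᵥ c ᵥ* W) + (t⁻¹ ^ 2 * (c ⬝ᵥ W *ᵥ c)) * w x := by
    intro x
    rw [dotProduct_comm _ (c ᵥ* W), ← dotProduct_mulVec]
    simp only [sub_dotProduct, mulVec_sub, dotProduct_sub, mulVec_smul, smul_dotProduct,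
      dotProduct_smul, smul_eq_mul]
    ring
  have hsquare : 0 ≤ ∫ x, w x * ((g x - t⁻¹ • c) ⬝ᵥ W *ᵥ (g x - t⁻¹ • c)) ∂μ :=
    integral_nonneg_of_ae (hw0.mono fun x hx => mul_nonneg hx (hW _))
  have hcross : c ⬝ᵥ c ᵥ* W = c ⬝ᵥ W *ᵥ c := by
    rw [dotProduct_comm, ← dotProduct_mulVec]
  have hleft := (Integrable.dotProduct_const hwg' (W *ᵥ c)).const_mul t⁻¹
  have hright := (Integrable.dotProduct_const hwg' (c ᵥ* W)).const_mul t⁻¹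
  have hc : (fun i => ∫ x, (w x • g x) i ∂μ) = c := rfl
  simp only [hexpand] at hsquare
  rw [MeasureTheory.integral_add, MeasureTheory.integral_sub, MeasureTheory.integral_sub,
    MeasureTheory.integral_const_mul, MeasureTheory.integral_const_mul, MeasureTheory.integral_const_mul,
    integral_dotProduct_const hwg', integral_dotProduct_const hwg', hc, hcross] at hsquare
  · have : t⁻¹ ^ 2 * (c ⬝ᵥ W *ᵥ c) * t = t⁻¹ * (c ⬝ᵥ W *ᵥ c) := by field_simp
    linarith
  exacts [hwq, hleft, hwq.sub hleft, hright, (hwq.sub hleft).sub hright, hw.const_mul _]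

end

theorem integral_sub_div_sub_pow {a b : ℝ} (hab : a ≠ b) (m : ℕ) :
    ∫ s in a..b, ((s - a) / (b - a)) ^ m = (b - a) / (m + 1) := by
  have hba : b - a ≠ 0 := sub_ne_zero.mpr hab.symm
  simp only [sub_div]
  rw [integral_comp_div_sub (fun x : ℝ => x ^ m) hba, sub_self, ← sub_div, div_self hba,
    integral_pow, one_pow, zero_pow m.succ_ne_zero, sub_zero, smul_eq_mul, mul_one_div]
  ring

theorem stmt_15_general (n : ℕ)
    (W : Matrix (Fin n) (Fin n) ℝ)
    (hWpsd : ∀ v : Fin n → ℝ, 0 ≤ v ⬝ᵥ W.mulVec v)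
    (m : ℕ) (a b : ℝ) (hab : a < b)
    (f : ℝ → Fin n → ℝ) (hf : ContinuousOn f (Set.Icc a b)) :
    ((m : ℝ) + 1) / (b - a) *
        ((fun i => ∫ s in a..b, ((s - a) / (b - a)) ^ m * f s i) ⬝ᵥ
          W.mulVec (fun i => ∫ s in a..b, ((s - a) / (b - a)) ^ m * f s i))
      ≤ ∫ s in a..b, ((s - a) / (b - a)) ^ m * (f s ⬝ᵥ W.mulVec (f s)) := by
  have hweight : Continuous fun s : ℝ => ((s - a) / (b - a)) ^ m := by fun_prop
  have hint : ∀ h : ℝ → ℝ, ContinuousOn h (Set.Icc a b) → IntegrableOn h (Set.Ioc a b) :=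
    fun h hh => (hh.integrableOn_Icc).mono_set Set.Ioc_subset_Icc_self
  have hquad : Continuous fun v : Fin n → ℝ => v ⬝ᵥ W *ᵥ v :=
    continuous_id.dotProduct (continuous_const.matrix_mulVec continuous_id)
  have hmass := integral_sub_div_sub_pow hab.ne m
  rw [← inv_div, ← hmass]
  simp only [intervalIntegral.integral_of_le hab.le] at hmass ⊢
  refine inv_integral_mul_quadForm_le_integral hWpsd ?_ (hint _ hweight.continuousOn)
    (fun i => hint _ (hweight.continuousOn.mul ((continuous_apply i).comp_continuousOn hf)))
    (hint _ (hweight.continuousOn.mul (hquad.comp_continuousOn hf))) ?_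
  · refine ae_restrict_of_forall_mem measurableSet_Ioc fun s hs => ?_
    exact pow_nonneg (div_nonneg (sub_nonneg.mpr hs.1.le) (sub_nonneg.mpr hab.le)) m
  · rw [hmass]
    have := sub_pos.mpr hab
    positivity

/-- Multiple-integral Jensen inequality (the one-term case ν = 0 of Lemma 2):
`∫_a^b ((s-a)/(b-a))^m f(s)ᵀ W f(s) ds
  ≥ ((m+1)/(b-a)) (∫_a^b ((s-a)/(b-a))^m f)ᵀ W (∫_a^b ((s-a)/(b-a))^m f)`. -/
theorem stmt_15 (n : ℕ) (hn : 1 ≤ n)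
    (W : Matrix (Fin n) (Fin n) ℝ) (hWsym : W.IsSymm)
    (hWpsd : ∀ v : Fin n → ℝ, 0 ≤ v ⬝ᵥ W.mulVec v)
    (m : ℕ) (a b : ℝ) (hab : a < b)
    (f : ℝ → Fin n → ℝ) (hf : ContinuousOn f (Set.Icc a b)) :
    ((m : ℝ) + 1) / (b - a) *
        ((fun i => ∫ s in a..b, ((s - a) / (b - a)) ^ m * f s i) ⬝ᵥ
          W.mulVec (fun i => ∫ s in a..b, ((s - a) / (b - a)) ^ m * f s i))
      ≤ ∫ s in a..b, ((s - a) / (b - a)) ^ m * (f s ⬝ᵥ W.mulVec (f s)) :=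
  stmt_15_general n W hWpsd m a b hab f hf
end
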